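/- Define τ(q) = √((q² − q + 1 − 2^{q−1})·(2^{q−1} − 1)) / (q(q−1)) for real q ∈ (1,2]. Then for every real q with 1 < q ≤ 2 and every t ∈ [0,1] with t ≤ 2·τ(q), it holds that 2 + q(q−1)·t² ≥ 2^q + (2 − 2^q)·√(1 − t²). -/

import Mathlib

/-- `τ(q) = √((q² − q + 1 − 2^{q−1})·(2^{q−1} − 1)) / (q(q−1))` (real powers). -/
noncomputable def tau (q : ℝ) : ℝ :=
  Real.sqrt ((q ^ 2 - q + 1 - (2 : ℝ) ^ (q - 1)) * ((2 : ℝ) ^ (q - 1) - 1)) /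
    (q * (q - 1))

theorem inner_interval_inequality (q t : ℝ) (hq1 : 1 < q) (hq2 : q ≤ 2)
    (ht : t ∈ Set.Icc (0 : ℝ) 1) (htau : t ≤ 2 * tau q) :
    (2 : ℝ) ^ q + (2 - (2 : ℝ) ^ q) * Real.sqrt (1 - t ^ 2) ≤
      2 + q * (q - 1) * t ^ 2 := by
  obtain ⟨ht0, ht1⟩ := ht
  have hc : 0 < q * (q - 1) := by nlinarith
  set p : ℝ := (2 : ℝ) ^ (q - 1) with hp
  have h2q : (2 : ℝ) ^ q = 2 * p := by
    have h : (2 : ℝ) ^ q = (2 : ℝ) ^ ((1 : ℝ) + (q - 1)) := by congr 1; ring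
    rw [h, Real.rpow_add (by norm_num : (0:ℝ) < 2), Real.rpow_one, hp]
  rcases eq_or_lt_of_le ht0 with h0 | h0
  · rw [← h0]
    norm_num
  · -- t > 0
    set X : ℝ := (q ^ 2 - q + 1 - p) * (p - 1) with hX
    have htau' : t ≤ 2 * (Real.sqrt X / (q * (q - 1))) := htau
    have hsX : 0 < Real.sqrt X := by
      by_contra h
      push_neg at h
      have : Real.sqrt X = 0 := le_antisymm h (Real.sqrt_nonneg _)
      rw [this] at htau'
      simp at htau'
      linarith
    have hXpos : 0 < X := Real.sqrt_pos.mp hsX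
    have hct : q * (q - 1) * t ≤ 2 * Real.sqrt X := by
      have := mul_le_mul_of_nonneg_left htau' hc.le
      calc q * (q - 1) * t ≤ q * (q - 1) * (2 * (Real.sqrt X / (q * (q - 1)))) := this
        _ = 2 * Real.sqrt X := by field_simp [(sub_pos.mpr hq1).ne']
    have hsq : (q * (q - 1) * t) ^ 2 ≤ 4 * X := by
      have h1 : (q * (q - 1) * t) ^ 2 ≤ (2 * Real.sqrt X) ^ 2 := by
        apply pow_le_pow_left₀ (by positivity) hct
      have h2 : (2 * Real.sqrt X) ^ 2 = 4 * X := by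
        rw [mul_pow, Real.sq_sqrt hXpos.le]; ring
      linarith [h1, h2.symm.le]
    set s : ℝ := Real.sqrt (1 - t ^ 2) with hs
    have h1t : 0 ≤ 1 - t ^ 2 := by nlinarith
    have hs0 : 0 ≤ s := Real.sqrt_nonneg _
    have hss : s ^ 2 = 1 - t ^ 2 := Real.sq_sqrt h1t
    have hs1 : s ≤ 1 := by nlinarith
    -- key inequality : 2(p-1) - c ≤ c s
    have key : 2 * (p - 1) - q * (q - 1) ≤ q * (q - 1) * s := by
      have hA : (2 * (p - 1) - q * (q - 1)) ^ 2 ≤ (q * (q - 1) * s) ^ 2 := by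
        have : (q * (q - 1) * s) ^ 2 = (q * (q - 1)) ^ 2 * (1 - t ^ 2) := by
          rw [mul_pow, hss]
        nlinarith [hsq]
      have hB : 0 ≤ q * (q - 1) * s := mul_nonneg hc.le hs0
      nlinarith [hA, hB]
    rw [h2q]
    nlinarith [mul_nonneg (by linarith : (0:ℝ) ≤ 1 - s)
      (by linarith : (0:ℝ) ≤ q * (q - 1) * s - (2 * (p - 1) - q * (q - 1))), hss]
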